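/- arXiv:2512.19222 — 2 statements merged into one kernel-verified Lean document; each statement's English description precedes it below -/
import Mathlib

section
/- Let V be a ℚ-vector space with a symmetric bilinear form B, let α, β ∈ V with B(β,β) = 0 and B(α,α) ≠ 0, and let k be a nonzero integer such that b := 2·B(β,α)/B(α,α) is an integer. If B(β+kα, β+kα) = 0 then b = -k; and if B(β+kα, β+kα) ≠ 0 and 2·B(α, β+kα)/B(β+kα, β+kα) is an integer, then b = 0 or b = -2k. -/
theorem stmt_3 {V : Type*} [AddCommGroup V] [Module ℚ V]
    (B : LinearMap.BilinForm ℚ V) (hB : B.IsSymm)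
    (α β : V) (hβ : B β β = 0) (hα : B α α ≠ 0)
    (k : ℤ) (hk : k ≠ 0) (b : ℤ) (hb : (b : ℚ) = 2 * B β α / B α α) :
    (B (β + (k : ℚ) • α) (β + (k : ℚ) • α) = 0 → b = -k) ∧
    (B (β + (k : ℚ) • α) (β + (k : ℚ) • α) ≠ 0 →
      (∃ n : ℤ, (n : ℚ) = 2 * B α (β + (k : ℚ) • α) / B (β + (k : ℚ) • α) (β + (k : ℚ) • α)) →
      b = 0 ∨ b = -2 * k) := by
  have hsym : B α β = B β α := hB.eq α β
  have hb2 : 2 * B β α = (b : ℚ) * B α α := by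
    field_simp at hb; linarith [hb]
  have hN : B (β + (k : ℚ) • α) (β + (k : ℚ) • α)
      = (k : ℚ) * ((b : ℚ) + k) * B α α := by
    simp only [map_add, map_smul, LinearMap.add_apply, LinearMap.smul_apply,
      smul_eq_mul, hβ, hsym]
    linear_combination (k:ℚ) * hb2
  have hkQ : (k : ℚ) ≠ 0 := Int.cast_ne_zero.mpr hk
  constructor
  · intro h0
    rw [hN] at h0
    have : (b : ℚ) + k = 0 := by
      rcases mul_eq_zero.mp h0 with h | h
      · rcases mul_eq_zero.mp h with h | h
        · exact absurd h hkQ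
        · exact h
      · exact absurd h hα
    have : (b : ℚ) = -k := by linarith
    exact_mod_cast this
  · intro hne ⟨n, hn⟩
    have hm : (b : ℚ) + k ≠ 0 := by
      intro h; apply hne; rw [hN, h]; ring
    have hnum : 2 * B α (β + (k : ℚ) • α) = ((b : ℚ) + 2 * k) * B α α := by
      simp only [map_add, map_smul, smul_eq_mul, hsym]
      linarith [hb2]
    have hNne : (k : ℚ) * ((b : ℚ) + k) * B α α ≠ 0 := by rw [← hN]; exact hne
    rw [hN, hnum, eq_div_iff hNne] at hn
    have key : (n : ℚ) * ((k : ℚ) * ((b : ℚ) + k)) = (b : ℚ) + 2 * k := by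
      apply mul_right_cancel₀ hα
      linear_combination hn
    have keyZ : n * (k * (b + k)) = b + 2 * k := by exact_mod_cast key
    -- integer arithmetic: m := b + k, m*(n*k-1) = k and k*(n*m-1) = m
    set m : ℤ := b + k with hmdef
    have hmne : m ≠ 0 := by
      intro h; apply hm; rw [hmdef] at h; exact_mod_cast congrArg (Int.cast : ℤ → ℚ) h
    have h1 : m * (n * k - 1) = k := by simp only [hmdef]; linear_combination keyZ
    have h2 : k * (n * m - 1) = m := by simp only [hmdef]; linear_combination keyZ
    have h3 : k * ((n * m - 1) * (n * k - 1)) = k := by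
      calc k * ((n * m - 1) * (n * k - 1)) = (k * (n * m - 1)) * (n * k - 1) := by ring
        _ = m * (n * k - 1) := by rw [h2]
        _ = k := h1
    have h4 : (n * m - 1) * (n * k - 1) = 1 :=
      mul_left_cancel₀ hk (by rw [h3, mul_one])
    have hu : IsUnit (n * k - 1) := IsUnit.of_mul_eq_one _ (by rw [mul_comm]; exact h4)
    rcases Int.isUnit_iff.mp hu with h | h
    · left
      have : m = k := by rw [← h1, h, mul_one]
      omega
    · right
      have : m = -k := by rw [← h1, h]; ring
      omega
end

section
/- Let V be a ℚ-vector space with a symmetric bilinear form B, and let α, β' ∈ V with B(β',β') = 0, B(α,α) ≠ 0, and b := 2·B(β',α)/B(α,α) an integer. Suppose that either B(β'+α, β'+α) = 0, or B(β'+α, β'+α) ≠ 0 and 2·B(α, β'+α)/B(β'+α, β'+α) is an integer. Then |b| ≤ 2. -/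
theorem stmt_4 {V : Type*} [AddCommGroup V] [Module ℚ V]
    (B : LinearMap.BilinForm ℚ V) (hB : B.IsSymm)
    (α β' : V) (hβ : B β' β' = 0) (hα : B α α ≠ 0)
    (b : ℤ) (hb : (b : ℚ) = 2 * B β' α / B α α)
    (h : B (β' + α) (β' + α) = 0 ∨
      (B (β' + α) (β' + α) ≠ 0 ∧
        ∃ n : ℤ, (n : ℚ) = 2 * B α (β' + α) / B (β' + α) (β' + α))) :
    |b| ≤ 2 := by
  set a := B α α with ha
  set x := B β' α with hx
  have hsym : B α β' = x := (LinearMap.BilinForm.isSymm_def.1 hB β' α).symm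
  have hba : (b : ℚ) * a = 2 * x := by
    rw [hb]; field_simp
  have hexp : B (β' + α) (β' + α) = a * ((b : ℚ) + 1) := by
    simp only [map_add, LinearMap.add_apply, hβ, hsym, ← hx, ← ha]
    ring_nf
    linarith [hba]
  have hexp2 : B α (β' + α) = a * ((b : ℚ) + 2) / 2 := by
    simp only [map_add, hsym, ← ha]
    field_simp
    linarith [hba]
  rcases h with h0 | ⟨hne, n, hn⟩
  · rw [hexp] at h0
    rcases mul_eq_zero.1 h0 with h | h
    · exact absurd h hα
    · have : (b : ℚ) = -1 := by linarith
      have : b = -1 := by exact_mod_cast this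
      simp [this]
  · rw [hexp, hexp2] at hn
    have hb1 : ((b : ℚ) + 1) ≠ 0 := by
      rw [hexp] at hne
      exact fun h => hne (by rw [h, mul_zero])
    have key : (n : ℚ) * ((b : ℚ) + 1) = (b : ℚ) + 2 := by
      have hd : a * ((b : ℚ) + 1) ≠ 0 := mul_ne_zero hα hb1
      have hn' : (n : ℚ) * (a * ((b : ℚ) + 1)) = a * ((b : ℚ) + 2) := by
        rw [hn]; field_simp
      refine mul_left_cancel₀ hα ?_
      linear_combination hn'
    have keyZ : n * (b + 1) = b + 2 := by exact_mod_cast key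
    have hdvd : (b + 1) ∣ 1 := ⟨n - 1, by linarith [keyZ]⟩
    have := Int.isUnit_iff.1 (isUnit_of_dvd_one hdvd)
    rw [abs_le]; omega
end
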